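/- Let Θ be an MLL proof structure such that Algorithm A with input Θ outputs yes. Then the directed graph G(S_∀ℓ(Θ)) is acyclic: if G(S_∀ℓ(Θ)) had a directed cycle, the rewriting system could not reduce T(Θ) to a one-node tree because the ⅋-elimination rule could never be applied to any of the ⅋-links contained in the cycle. -/

import Mathlib

/-! ## MLL formulas, links, proof structures, proof nets, DR-switchings -/

abbrev Occ := ℕ

/-- MLL formulas over the single atom `p`. -/
inductive MLLFormula : Type
  | pos : MLLFormula
  | neg : MLLFormula
  | tensor : MLLFormula → MLLFormula → MLLFormula
  | par : MLLFormula → MLLFormula → MLLFormula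
deriving DecidableEq

/-- MLL links, given by their occurrences. -/
inductive MLLLink : Type
  | id (c1 c2 : Occ) : MLLLink
  | tensor (l r c : Occ) : MLLLink
  | par (l r c : Occ) : MLLLink
deriving DecidableEq

def MLLLink.prems : MLLLink → List Occ
  | .id _ _ => []
  | .tensor l r _ => [l, r]
  | .par l r _ => [l, r]

def MLLLink.concs : MLLLink → List Occ
  | .id c1 c2 => [c1, c2]
  | .tensor _ _ c => [c]
  | .par _ _ c => [c]

def MLLLink.IsPar : MLLLink → Prop
  | .par _ _ _ => True
  | _ => False

/-- An MLL proof structure: a finite set of links over formula occurrences. -/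
structure ProofStructure where
  links : Finset MLLLink
  form : Occ → MLLFormula
  nodupLink : ∀ L ∈ links, (MLLLink.concs L ++ MLLLink.prems L).Nodup
  formOk : ∀ L ∈ links,
    (∀ c1 c2, L = MLLLink.id c1 c2 → form c1 = MLLFormula.pos ∧ form c2 = MLLFormula.neg) ∧
    (∀ l r c, L = MLLLink.tensor l r c → form c = MLLFormula.tensor (form l) (form r)) ∧
    (∀ l r c, L = MLLLink.par l r c → form c = MLLFormula.par (form l) (form r))
  concUnique : ∀ L1 ∈ links, ∀ L2 ∈ links, ∀ x,
    x ∈ MLLLink.concs L1 → x ∈ MLLLink.concs L2 → L1 = L2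
  premUnique : ∀ L1 ∈ links, ∀ L2 ∈ links, ∀ x,
    x ∈ MLLLink.prems L1 → x ∈ MLLLink.prems L2 → L1 = L2
  premIsConc : ∀ L ∈ links, ∀ x ∈ MLLLink.prems L, ∃ K ∈ links, K ≠ L ∧ x ∈ MLLLink.concs K

/-- The set of occurrences of a set of links. -/
def occsOf (S : Finset MLLLink) : Set Occ :=
  {x | ∃ L ∈ S, x ∈ MLLLink.concs L ∨ x ∈ MLLLink.prems L}

/-- `x` is a conclusion of the set of links `S`, i.e. a conclusion of some link of `S`
that is not a premise of any link of `S`. -/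
def IsConcOfSet (S : Finset MLLLink) (x : Occ) : Prop :=
  (∃ L ∈ S, x ∈ MLLLink.concs L) ∧ ∀ L ∈ S, x ∉ MLLLink.prems L

/-- Sequentializability: the inductive construction of MLL proof nets, mirroring
the ID, ⊗ and ⅋ rules of the MLL sequent calculus. -/
inductive Sequentializable (form : Occ → MLLFormula) : Finset MLLLink → Prop
  | id (c1 c2 : Occ) : c1 ≠ c2 → form c1 = MLLFormula.pos → form c2 = MLLFormula.neg →
      Sequentializable form {MLLLink.id c1 c2}
  | tensor (S1 S2 : Finset MLLLink) (l r c : Occ) :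
      Sequentializable form S1 → Sequentializable form S2 →
      (∀ x, x ∈ occsOf S1 → x ∉ occsOf S2) →
      IsConcOfSet S1 l → IsConcOfSet S2 r →
      c ∉ occsOf S1 → c ∉ occsOf S2 →
      form c = MLLFormula.tensor (form l) (form r) →
      Sequentializable form (insert (MLLLink.tensor l r c) (S1 ∪ S2))
  | par (S : Finset MLLLink) (l r c : Occ) :
      Sequentializable form S →
      l ≠ r → IsConcOfSet S l → IsConcOfSet S r →
      c ∉ occsOf S →
      form c = MLLFormula.par (form l) (form r) →
      Sequentializable form (insert (MLLLink.par l r c) S)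

/-- An MLL proof net is a sequentializable MLL proof structure. -/
def ProofStructure.IsProofNet (Θ : ProofStructure) : Prop :=
  Sequentializable Θ.form Θ.links

/-- The edges contributed by a link under a DR-switching `sw`
(`sw L = false` selects the left premise of a ⅋-link, `true` the right one). -/
def drStep (sw : MLLLink → Bool) (L : MLLLink) (x y : Occ) : Prop :=
  match L with
  | .id c1 c2 => x = c1 ∧ y = c2
  | .tensor l r c => (x = l ∧ y = c) ∨ (x = r ∧ y = c)
  | .par l r c => if sw (MLLLink.par l r c) = true then x = r ∧ y = c else x = l ∧ y = c

/-- The DR-graph of a proof structure under a DR-switching. -/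
def DRGraph (Θ : ProofStructure) (sw : MLLLink → Bool) : SimpleGraph Occ where
  Adj x y := x ≠ y ∧ ∃ L ∈ Θ.links, drStep sw L x y ∨ drStep sw L y x
  symm := by
    constructor
    rintro x y ⟨hxy, L, hL, h⟩
    exact ⟨hxy.symm, L, hL, h.symm⟩
  loopless := by constructor; rintro x ⟨hxx, _⟩; exact hxx rfl

def ProofStructure.occSet (Θ : ProofStructure) : Set Occ := occsOf Θ.links

/-- The extreme left DR-switching `S_∀ℓ`. -/
def extremeLeft : MLLLink → Bool := fun _ => false

/-- The extreme left DR-graph `S_∀ℓ(Θ)`. -/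
def DRGraphL (Θ : ProofStructure) : SimpleGraph Occ := DRGraph Θ extremeLeft

/-- `S_∀ℓ(Θ)` is a tree (on the vertex set of occurrences of `Θ`). -/
def DRTreeL (Θ : ProofStructure) : Prop :=
  ((DRGraphL Θ).induce Θ.occSet).IsTree

/-- Consistency of a ⅋-link with premises `l`, `r` and conclusion `c`:
the unique path in the tree `S_∀ℓ(Θ)` from `l` to `r` does not contain `c`. -/
def ParLinkConsistent (Θ : ProofStructure) (l r c : Occ) : Prop :=
  ∀ p : (DRGraphL Θ).Walk l r, p.IsPath → c ∉ p.support

/-- Every ⅋-link of `Θ` is consistent in `S_∀ℓ(Θ)`. -/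
def AllParConsistent (Θ : ProofStructure) : Prop :=
  ∀ l r c, MLLLink.par l r c ∈ Θ.links → ParLinkConsistent Θ l r c

/-- The edge relation of the directed graph `G(S_∀ℓ(Θ))` on ⅋-links:
`(L1, L2)` is an edge when the unique path in `S_∀ℓ(Θ)` between the premises of `L2`
contains the node of `L1`. -/
def deNMRel (Θ : ProofStructure) (L1 L2 : MLLLink) : Prop :=
  L1 ∈ Θ.links ∧ L2 ∈ Θ.links ∧ L1 ≠ L2 ∧
  ∃ l1 r1 c1, L1 = MLLLink.par l1 r1 c1 ∧
  ∃ l2 r2 c2, L2 = MLLLink.par l2 r2 c2 ∧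
  ∃ p : (DRGraphL Θ).Walk l2 r2, p.IsPath ∧ c1 ∈ p.support

/-- Acyclicity of a directed graph given by a relation. -/
def DirAcyclicRel {α : Type} (R : α → α → Prop) : Prop :=
  ∀ x, ¬ Relation.TransGen R x x

/-- `x` is the left premise of the ⅋-link `P` of `Θ`. -/
def leftPremOfPar (Θ : ProofStructure) (x : Occ) (P : MLLLink) : Prop :=
  P ∈ Θ.links ∧ ∃ r c, P = MLLLink.par x r c

/-- `x` is the right premise of the ⅋-link `P` of `Θ`. -/
def rightPremOfPar (Θ : ProofStructure) (x : Occ) (P : MLLLink) : Prop :=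
  P ∈ Θ.links ∧ ∃ l c, P = MLLLink.par l x c

/-- `x` is a premise of some ⅋-link of `Θ`. -/
def premOfParLink (Θ : ProofStructure) (x : Occ) : Prop :=
  ∃ P, leftPremOfPar Θ x P ∨ rightPremOfPar Θ x P

/-- `x` is a conclusion of the proof structure `Θ`. -/
def IsConcOfTheta (Θ : ProofStructure) (x : Occ) : Prop :=
  IsConcOfSet Θ.links x

/-! ## deNM-trees, the translation T(Θ), the rewriting system, and Algorithm A -/

/-- Labels `ℓ_L` and `r_L` for ⅋-links `L`. -/
inductive DLabel : Type
  | left (L : MLLLink) : DLabel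
  | right (L : MLLLink) : DLabel
deriving DecidableEq

/-- A node of a deNM-tree is either a labeled node carrying a finite label set,
or a ⅋-node labeled by a ⅋-link. -/
inductive DNodeKind : Type
  | labeled (s : Finset DLabel) : DNodeKind
  | par (L : MLLLink) : DNodeKind

/-- The raw data of a deNM-tree: a finite vertex set, a node-kind assignment,
a finite edge set, and for each ⅋-node the neighbour attached at its upper port. -/
structure PreTree where
  V : Finset ℕ
  kind : ℕ → DNodeKind
  edges : Finset (Sym2 ℕ)
  upper : ℕ → Option ℕ

/-- The underlying undirected graph of a deNM-tree. -/
def PreTree.graph (T : PreTree) : SimpleGraph ℕ where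
  Adj x y := x ≠ y ∧ s(x, y) ∈ T.edges
  symm := by
    constructor
    rintro x y ⟨hxy, he⟩
    exact ⟨hxy.symm, by rwa [Sym2.eq_swap]⟩
  loopless := by constructor; rintro x ⟨hxx, _⟩; exact hxx rfl

/-- The degree of a vertex. -/
def PreTree.degree (T : PreTree) (v : ℕ) : ℕ :=
  (T.edges.filter (fun e => v ∈ e)).card

/-- `n` is a labeled node of `T`. -/
def PreTree.IsLabeledVertex (T : PreTree) (n : ℕ) : Prop :=
  n ∈ T.V ∧ ∃ s, T.kind n = DNodeKind.labeled s

/-- `T` is a deNM-tree: a finite tree whose ⅋-nodes have degree 1 or 2 and have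
their upper port attached to a neighbour. -/
def PreTree.IsDeNMTree (T : PreTree) : Prop :=
  (∀ e ∈ T.edges, ∀ x ∈ e, x ∈ T.V) ∧
  (∀ e ∈ T.edges, ¬ e.IsDiag) ∧
  (T.graph.induce (↑T.V : Set ℕ)).IsTree ∧
  ∀ v ∈ T.V, ∀ L, T.kind v = DNodeKind.par L →
    (∃ u ∈ T.V, T.upper v = some u ∧ s(v, u) ∈ T.edges) ∧
    1 ≤ T.degree v ∧ T.degree v ≤ 2

/-- ⅋-consistency of a deNM-tree: for every ⅋-node `v` (for the ⅋-link `L`),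
the unique path between its upper-port neighbour (the left premise position)
and any labeled node carrying `r_L` (the right premise position) avoids `v`. -/
def PreTree.ParConsistentD (T : PreTree) : Prop :=
  ∀ v ∈ T.V, ∀ L, T.kind v = DNodeKind.par L →
    ∀ u, T.upper v = some u →
      ∀ w ∈ T.V, ∀ s, T.kind w = DNodeKind.labeled s → DLabel.right L ∈ s →
        ∀ p : T.graph.Walk u w, p.IsPath → v ∉ p.support

/-- The induced directed relation on ⅋-nodes of a deNM-tree:
`(v1, v2)` when the path between the two premise positions of `v2`'s ⅋-link
passes through `v1`. -/
def PreTree.dirRel (T : PreTree) (v1 v2 : ℕ) : Prop :=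
  v1 ∈ T.V ∧ v2 ∈ T.V ∧ v1 ≠ v2 ∧
  (∃ L1, T.kind v1 = DNodeKind.par L1) ∧
  ∃ L2, T.kind v2 = DNodeKind.par L2 ∧
    ∃ u, T.upper v2 = some u ∧
      ∃ w ∈ T.V, ∃ s, T.kind w = DNodeKind.labeled s ∧ DLabel.right L2 ∈ s ∧
        ∃ p : T.graph.Walk u w, p.IsPath ∧ v1 ∈ p.support

/-- Directed acyclicity of a deNM-tree. -/
def PreTree.DirAcyclicD (T : PreTree) : Prop :=
  ∀ v, ¬ Relation.TransGen T.dirRel v v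

/-! ### The translation `T(Θ)` -/

/-- A ⅋-link of `Θ` gets an auxiliary labeled node exactly when its conclusion is a
premise of another ⅋-link. -/
def hasAux (Θ : ProofStructure) (L : MLLLink) : Prop :=
  L ∈ Θ.links ∧ ∃ l r c, L = MLLLink.par l r c ∧ premOfParLink Θ c

/-- The label contributed by an occurrence `x`: `ℓ_P` if `x` is the left premise of a
⅋-link `P`, `r_P` if `x` is the right premise of `P`. -/
def labelOfOcc (Θ : ProofStructure) (x : Occ) (d : DLabel) : Prop :=
  (∃ P, leftPremOfPar Θ x P ∧ d = DLabel.left P) ∨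
  (∃ P, rightPremOfPar Θ x P ∧ d = DLabel.right P)

/-- The labels carried by the (auxiliary) labeled node of a link `K`:
those contributed by the conclusions of `K`. -/
def linkLabel (Θ : ProofStructure) (K : MLLLink) (d : DLabel) : Prop :=
  ∃ x ∈ MLLLink.concs K, labelOfOcc Θ x d

/-- The node through which the subtree translating `K` connects upwards. -/
def OutIs (Θ : ProofStructure) (main aux : MLLLink → ℕ) (K : MLLLink) (v : ℕ) : Prop :=
  (hasAux Θ K ∧ v = aux K) ∨ (¬ hasAux Θ K ∧ v = main K)

/-- The edges of the translation. -/
def EdgeSpec (Θ : ProofStructure) (main aux : MLLLink → ℕ) (u v : ℕ) : Prop :=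
  (∃ x K M, K ∈ Θ.links ∧ M ∈ Θ.links ∧ x ∈ MLLLink.concs K ∧ x ∈ MLLLink.prems M ∧
      ¬ MLLLink.IsPar M ∧ OutIs Θ main aux K u ∧ v = main M) ∨
  (∃ K l r c, K ∈ Θ.links ∧ MLLLink.par l r c ∈ Θ.links ∧ l ∈ MLLLink.concs K ∧
      OutIs Θ main aux K u ∧ v = main (MLLLink.par l r c)) ∨
  (∃ L, hasAux Θ L ∧ u = main L ∧ v = aux L)

/-- The translation `T(Θ)` is defined: `S_∀ℓ(Θ)` is a tree, no ID-link has both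
conclusions premises of ⅋-links, and no ID-link has one conclusion a conclusion of `Θ`
while the other is a premise of a ⅋-link. -/
def TransDefined (Θ : ProofStructure) : Prop :=
  DRTreeL Θ ∧
  ∀ c1 c2, MLLLink.id c1 c2 ∈ Θ.links →
    ¬(premOfParLink Θ c1 ∧ premOfParLink Θ c2) ∧
    ¬(IsConcOfTheta Θ c1 ∧ premOfParLink Θ c2) ∧
    ¬(IsConcOfTheta Θ c2 ∧ premOfParLink Θ c1)

/-- `T` is (a copy of) the deNM-tree `T(Θ)` translating `Θ`. -/
def IsTranslation (Θ : ProofStructure) (T : PreTree) : Prop :=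
  TransDefined Θ ∧
  ∃ main aux : MLLLink → ℕ,
    (∀ L1 ∈ Θ.links, ∀ L2 ∈ Θ.links, main L1 = main L2 → L1 = L2) ∧
    (∀ L1 L2, hasAux Θ L1 → hasAux Θ L2 → aux L1 = aux L2 → L1 = L2) ∧
    (∀ L1 ∈ Θ.links, ∀ L2, hasAux Θ L2 → main L1 ≠ aux L2) ∧
    (∀ v, v ∈ T.V ↔ ((∃ L ∈ Θ.links, v = main L) ∨ (∃ L, hasAux Θ L ∧ v = aux L))) ∧
    (∀ L ∈ Θ.links, ¬ MLLLink.IsPar L →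
        ∃ s, T.kind (main L) = DNodeKind.labeled s ∧ ∀ d, d ∈ s ↔ linkLabel Θ L d) ∧
    (∀ L ∈ Θ.links, MLLLink.IsPar L → T.kind (main L) = DNodeKind.par L) ∧
    (∀ L, hasAux Θ L →
        ∃ s, T.kind (aux L) = DNodeKind.labeled s ∧ ∀ d, d ∈ s ↔ linkLabel Θ L d) ∧
    (∀ l r c, MLLLink.par l r c ∈ Θ.links →
        ∀ K ∈ Θ.links, l ∈ MLLLink.concs K →
          ∀ u, OutIs Θ main aux K u → T.upper (main (MLLLink.par l r c)) = some u) ∧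
    (∀ e, e ∈ T.edges ↔
        ∃ u v, e = s(u, v) ∧ (EdgeSpec Θ main aux u v ∨ EdgeSpec Θ main aux v u))

/-! ### The rewriting system and Algorithm A -/

def replaceN (v a : ℕ) : ℕ → ℕ := fun x => if x = v then a else x

/-- Eliminate the node `v`, letting `a` absorb the remaining connections of `v`
(used by the ⅋-elimination rule). -/
def PreTree.elimAt (T : PreTree) (v a : ℕ) : PreTree where
  V := T.V.erase v
  kind := T.kind
  edges := (T.edges.image (Sym2.map (replaceN v a))).filter (fun e => ¬ e.IsDiag)
  upper := T.upper

def mergeKind (k k' : DNodeKind) : DNodeKind :=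
  match k, k' with
  | DNodeKind.labeled s, DNodeKind.labeled s' => DNodeKind.labeled (s ∪ s')
  | k, _ => k

/-- Merge the labeled node `n'` into the labeled node `a`, taking the union of the
label sets (used by the union rule). -/
def PreTree.contract (T : PreTree) (a n' : ℕ) : PreTree where
  V := T.V.erase n'
  kind := fun x => if x = a then mergeKind (T.kind a) (T.kind n') else T.kind x
  edges := (T.edges.image (Sym2.map (replaceN n' a))).filter (fun e => ¬ e.IsDiag)
  upper := fun x => (T.upper x).map (replaceN n' a)

/-- The three rewrite rules. -/
inductive RRule : Type
  | elim | union | jump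

/-- A configuration of Algorithm A: the current deNM-tree, the active (labeled)
node, and the set of ⅋-links to which the local jump rule has been applied. -/
structure Config where
  tree : PreTree
  active : ℕ
  jumped : Finset MLLLink

/-- One application of a rewrite rule at the active node. -/
inductive Step : RRule → Config → Config → Prop
  | elim (c : Config) (v : ℕ) (L : MLLLink) (s : Finset DLabel) :
      c.active ∈ c.tree.V → v ∈ c.tree.V →
      c.tree.kind c.active = DNodeKind.labeled s →
      c.tree.kind v = DNodeKind.par L →
      c.tree.upper v = some c.active →
      s(c.active, v) ∈ c.tree.edges →
      DLabel.left L ∈ s → DLabel.right L ∈ s →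
      Step RRule.elim c
        { tree := c.tree.elimAt v c.active, active := c.active, jumped := c.jumped }
  | union (c : Config) (n' : ℕ) (s s' : Finset DLabel) :
      c.active ∈ c.tree.V → n' ∈ c.tree.V → n' ≠ c.active →
      c.tree.kind c.active = DNodeKind.labeled s →
      c.tree.kind n' = DNodeKind.labeled s' →
      s(c.active, n') ∈ c.tree.edges →
      Step RRule.union c
        { tree := c.tree.contract c.active n', active := c.active, jumped := c.jumped }
  | jump (c : Config) (v m : ℕ) (L : MLLLink) (s s' : Finset DLabel) :
      c.active ∈ c.tree.V → v ∈ c.tree.V → m ∈ c.tree.V →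
      c.tree.kind c.active = DNodeKind.labeled s →
      c.tree.kind v = DNodeKind.par L →
      s(c.active, v) ∈ c.tree.edges →
      c.tree.upper v ≠ some c.active →
      c.tree.kind m = DNodeKind.labeled s' →
      DLabel.right L ∈ s' →
      L ∉ c.jumped →
      Step RRule.jump c { tree := c.tree, active := m, jumped := insert L c.jumped }

def StepAny (c c' : Config) : Prop := ∃ r, Step r c c'

/-- No rewrite rule applies. -/
def Stuck (c : Config) : Prop := ∀ r c', ¬ Step r c c'

/-- `s` is the full label set `S_full` of `Θ`. -/
def SfullSpec (Θ : ProofStructure) (s : Finset DLabel) : Prop :=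
  ∀ d, d ∈ s ↔ ∃ l r c, MLLLink.par l r c ∈ Θ.links ∧
    (d = DLabel.left (MLLLink.par l r c) ∨ d = DLabel.right (MLLLink.par l r c))

/-- The terminal tree is a single degree-0 node labeled by `S_full`. -/
def FinalYes (Θ : ProofStructure) (c : Config) : Prop :=
  c.tree.V = {c.active} ∧ c.tree.edges = ∅ ∧
  ∃ s, c.tree.kind c.active = DNodeKind.labeled s ∧ SfullSpec Θ s

/-- Algorithm A with input `Θ` outputs yes. -/
def AlgAYes (Θ : ProofStructure) : Prop :=
  TransDefined Θ ∧
  ∀ T, IsTranslation Θ T → ∀ n, T.IsLabeledVertex n →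
    ∀ c', Relation.ReflTransGen StepAny { tree := T, active := n, jumped := ∅ } c' →
      Stuck c' → FinalYes Θ c'

/-- The local jump rule is applicable (up to the double-application check) at the
active node of `c`, targeting the ⅋-link `L`. -/
def JumpReady (c : Config) (L : MLLLink) : Prop :=
  c.active ∈ c.tree.V ∧ (∃ s, c.tree.kind c.active = DNodeKind.labeled s) ∧
  ∃ v ∈ c.tree.V, c.tree.kind v = DNodeKind.par L ∧
    s(c.active, v) ∈ c.tree.edges ∧ c.tree.upper v ≠ some c.active


/-!
Let `L` lie on a cycle of `G(S_∀ℓ(Θ))` and let `L₀` be its predecessor on the cycle. In `T(Θ)`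
the ⅋-node of `L₀` separates the upper neighbour of the ⅋-node of `L` from every node labeled
`r_L`: a path of `T(Θ)` avoiding both ⅋-nodes would give a path of the tree `S_∀ℓ(Θ)` between the
premises of `L` avoiding the conclusion of `L₀`, while the unique such path contains it. Union and
⅋-elimination only merge adjacent nodes, so the separation persists while both ⅋-nodes survive,
and it forbids the ⅋-elimination of `L`, which needs `r_L` at the upper neighbour. Hence no
⅋-link of a cycle is ever eliminated, and since the rewriting terminates, the final tree still
contains a ⅋-node and is not a single labeled node.
-/

namespace Relation

theorem exists_reflTransGen_forall_not_of_measure {α : Type*} {r : α → α → Prop}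
    {P : α → Prop} (μ : α → ℕ) (hP : ∀ a b, P a → r a b → P b)
    (hμ : ∀ a b, P a → r a b → μ b < μ a) {a : α} (ha : P a) :
    ∃ b, ReflTransGen r a b ∧ P b ∧ ∀ c, ¬ r b c := by
  induction hn : μ a using Nat.strong_induction_on generalizing a with
  | _ n ih =>
    by_cases hstuck : ∀ c, ¬ r a c
    · exact ⟨a, .refl, ha, hstuck⟩
    · push Not at hstuck
      obtain ⟨c, hac⟩ := hstuck
      obtain ⟨b, hcb, hb⟩ := ih _ (hn ▸ hμ a c ha hac) (hP a c ha hac) rfl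
      exact ⟨b, .head hac hcb, hb⟩

end Relation

namespace SimpleGraph

variable {V : Type*} (G : SimpleGraph V)

def AvoidingReach (S : Set V) : V → V → Prop :=
  Relation.ReflTransGen fun x y => G.Adj x y ∧ x ∉ S ∧ y ∉ S

variable {G} {S : Set V} {x y : V}

theorem AvoidingReach.single (h : G.Adj x y) (hx : x ∉ S) (hy : y ∉ S) :
    G.AvoidingReach S x y :=
  Relation.ReflTransGen.single ⟨h, hx, hy⟩

theorem AvoidingReach.symm (h : G.AvoidingReach S x y) : G.AvoidingReach S y x := by
  induction h with
  | refl => exact .refl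
  | tail _ hstep ih => exact (AvoidingReach.single hstep.1.symm hstep.2.2 hstep.2.1).trans ih

theorem AvoidingReach.eq_or_exists_walk (h : G.AvoidingReach S x y) :
    x = y ∨ ∃ q : G.Walk x y, ∀ z ∈ q.support, z ∉ S := by
  induction h using Relation.ReflTransGen.head_induction_on with
  | refl => exact .inl rfl
  | head hstep _ ih =>
    obtain ⟨hadj, hx, hb⟩ := hstep
    refine .inr ?_
    rcases ih with rfl | ⟨q, hq⟩
    · exact ⟨.cons hadj .nil, by simp [hx, hb]⟩
    · exact ⟨.cons hadj q, by simpa [hx] using hq⟩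

theorem Walk.forall_mem_of_support_subset {s : Set V} (hG : G.support ⊆ s) {a b : V}
    (ha : a ∈ s) (q : G.Walk a b) : ∀ z ∈ q.support, z ∈ s := by
  induction q with
  | nil => simpa using ha
  | cons h q ih =>
    simp only [Walk.support_cons, List.mem_cons, forall_eq_or_imp]
    exact ⟨ha, ih (hG ⟨_, h.symm⟩)⟩

theorem mem_support_of_isAcyclic_induce {s : Set V} (hs : (G.induce s).IsAcyclic)
    (hG : G.support ⊆ s) {a b c : V} (ha : a ∈ s) {p : G.Walk a b} (hp : p.IsPath)
    (hc : c ∈ p.support) (q : G.Walk a b) : c ∈ q.support := by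
  classical
  set p' := p.induce s (Walk.forall_mem_of_support_subset hG ha p)
  set q' := q.induce s (Walk.forall_mem_of_support_subset hG ha q)
  have hp' : p'.IsPath := by
    rw [← Walk.isPath_map_iff_of_injective (f := (Embedding.induce s).toHom)
      Subtype.val_injective, Walk.map_induce]
    exact hp
  have hpq : p' = q'.bypass :=
    congrArg Subtype.val ((hs.subsingleton_path _ _).elim ⟨p', hp'⟩ ⟨_, q'.bypass_isPath⟩)
  have hc' : (⟨c, Walk.forall_mem_of_support_subset hG ha p c hc⟩ : s) ∈ q'.support :=
    q'.support_bypass_subset_support (hpq ▸ by simpa [p'] using hc)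
  simpa [q'] using hc'

end SimpleGraph

namespace ProofStructure

variable {Θ : ProofStructure}

theorem ne_of_par_mem {l r c : Occ} (h : MLLLink.par l r c ∈ Θ.links) :
    l ≠ r ∧ l ≠ c ∧ r ≠ c := by
  have := Θ.nodupLink _ h
  simp [MLLLink.concs, MLLLink.prems] at this
  tauto

theorem drAdj_of_par_mem {l r c : Occ} (h : MLLLink.par l r c ∈ Θ.links) :
    (DRGraphL Θ).Adj l c :=
  ⟨(ne_of_par_mem h).2.1, _, h, .inl (by simp [drStep, extremeLeft])⟩

theorem drAdj_of_tensor_mem {l r c : Occ} (h : MLLLink.tensor l r c ∈ Θ.links) {x : Occ}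
    (hx : x ∈ (MLLLink.tensor l r c).prems) : (DRGraphL Θ).Adj x c := by
  have := Θ.nodupLink _ h
  simp only [MLLLink.concs, MLLLink.prems, List.mem_cons, List.not_mem_nil, or_false] at this hx
  rcases hx with rfl | rfl
  · exact ⟨by rintro rfl; simp_all, _, h, .inl (.inl ⟨rfl, rfl⟩)⟩
  · exact ⟨by rintro rfl; simp_all, _, h, .inl (.inr ⟨rfl, rfl⟩)⟩

theorem eq_or_drAdj_of_mem_concs {K : MLLLink} (hK : K ∈ Θ.links) {o o' : Occ}
    (ho : o ∈ K.concs) (ho' : o' ∈ K.concs) : o = o' ∨ (DRGraphL Θ).Adj o o' := by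
  have hnd := Θ.nodupLink _ hK
  cases K with
  | id a b =>
    simp only [MLLLink.concs, List.mem_cons, List.not_mem_nil, or_false] at ho ho'
    have hab : a ≠ b := by simpa [MLLLink.concs, MLLLink.prems] using hnd
    have hadj : (DRGraphL Θ).Adj a b := ⟨hab, _, hK, .inl ⟨rfl, rfl⟩⟩
    rcases ho with rfl | rfl <;> rcases ho' with rfl | rfl <;> simp [hadj, hadj.symm]
  | tensor | par => simp_all [MLLLink.concs]

theorem support_drGraphL_subset : (DRGraphL Θ).support ⊆ Θ.occSet := by
  rintro x ⟨y, -, L, hL, hstep⟩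
  refine ⟨L, hL, ?_⟩
  cases L <;> simp only [drStep, extremeLeft, Bool.false_eq_true, ite_false] at hstep <;>
    simp only [MLLLink.concs, MLLLink.prems, List.mem_cons, List.not_mem_nil, or_false] <;> grind

end ProofStructure

namespace MLLLink

def toTuple : MLLLink → ℕ × ℕ × ℕ × ℕ
  | .id a b => (0, a, b, 0)
  | .tensor l r c => (1, l, r, c)
  | .par l r c => (2, l, r, c)

def ofTuple : ℕ × ℕ × ℕ × ℕ → MLLLink
  | (0, a, b, _) => .id a b
  | (1, l, r, c) => .tensor l r c
  | (_, l, r, c) => .par l r c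

instance : Encodable MLLLink :=
  Encodable.ofLeftInverse toTuple ofTuple fun L => by cases L <;> rfl

end MLLLink

/-- The nodes of `T(Θ)` are numbered by encoding `Sum.inl L` for the node of a link `L` and
`Sum.inr L` for the auxiliary labeled node of a ⅋-link `L`. -/
def mainNode (L : MLLLink) : ℕ := Encodable.encode (Sum.inl L : MLLLink ⊕ MLLLink)

def auxNode (L : MLLLink) : ℕ := Encodable.encode (Sum.inr L : MLLLink ⊕ MLLLink)

theorem mainNode_injective : Function.Injective mainNode :=
  fun _ _ h => Sum.inl_injective (Encodable.encode_injective h)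

theorem auxNode_injective : Function.Injective auxNode :=
  fun _ _ h => Sum.inr_injective (Encodable.encode_injective h)

theorem mainNode_ne_auxNode (K L : MLLLink) : mainNode K ≠ auxNode L :=
  fun h => Sum.inl_ne_inr (Encodable.encode_injective h)

noncomputable section

open Classical

namespace ProofStructure

variable (Θ : ProofStructure)

def labelSet (K : MLLLink) : Finset DLabel :=
  (Θ.links.biUnion fun P => {DLabel.left P, DLabel.right P}).filter (linkLabel Θ K)

def outNode (K : MLLLink) : ℕ := if hasAux Θ K then auxNode K else mainNode K

def nodeKind : MLLLink ⊕ MLLLink → DNodeKind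
  | .inl (.par l r c) => .par (.par l r c)
  | .inl K => .labeled (Θ.labelSet K)
  | .inr K => .labeled (Θ.labelSet K)

def nodeUpper : MLLLink ⊕ MLLLink → Option ℕ
  | .inl (.par l _ _) =>
    if h : ∃ K ∈ Θ.links, l ∈ K.concs then some (Θ.outNode h.choose) else none
  | _ => none

def transVerts : Finset ℕ :=
  Θ.links.image mainNode ∪ (Θ.links.filter (hasAux Θ)).image auxNode

def transTree : PreTree where
  V := Θ.transVerts
  kind v := (Encodable.decode v).elim (.labeled ∅) Θ.nodeKind
  edges := ((Θ.transVerts ×ˢ Θ.transVerts).image fun p => s(p.1, p.2)).filter fun e =>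
    ∃ u v, e = s(u, v) ∧ (EdgeSpec Θ mainNode auxNode u v ∨ EdgeSpec Θ mainNode auxNode v u)
  upper v := (Encodable.decode v).bind Θ.nodeUpper

variable {Θ}

theorem mem_labelSet {K : MLLLink} {d : DLabel} : d ∈ Θ.labelSet K ↔ linkLabel Θ K d := by
  refine ⟨fun h => (Finset.mem_filter.1 h).2, fun h => Finset.mem_filter.2 ⟨?_, h⟩⟩
  obtain ⟨x, -, (⟨P, ⟨hP, -⟩, rfl⟩ | ⟨P, ⟨hP, -⟩, rfl⟩)⟩ := h <;>
    exact Finset.mem_biUnion.2 ⟨P, hP, by simp⟩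

theorem exists_eq_par_of_hasAux {K : MLLLink} (h : hasAux Θ K) : ∃ l r c, K = .par l r c :=
  let ⟨_, l, r, c, hK, _⟩ := h
  ⟨l, r, c, hK⟩

theorem outIs_iff {K : MLLLink} {u : ℕ} : OutIs Θ mainNode auxNode K u ↔ u = Θ.outNode K := by
  unfold OutIs outNode
  by_cases h : hasAux Θ K <;> simp [h]

theorem mem_transVerts {v : ℕ} : v ∈ Θ.transVerts ↔
    (∃ L ∈ Θ.links, v = mainNode L) ∨ (∃ L, hasAux Θ L ∧ v = auxNode L) := by
  simp only [transVerts, Finset.mem_union, Finset.mem_image, Finset.mem_filter]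
  constructor
  · rintro (⟨L, hL, rfl⟩ | ⟨L, ⟨-, hA⟩, rfl⟩)
    exacts [.inl ⟨L, hL, rfl⟩, .inr ⟨L, hA, rfl⟩]
  · rintro (⟨L, hL, rfl⟩ | ⟨L, hA, rfl⟩)
    exacts [.inl ⟨L, hL, rfl⟩, .inr ⟨L, ⟨hA.1, hA⟩, rfl⟩]

theorem outNode_mem_transVerts {K : MLLLink} (hK : K ∈ Θ.links) :
    Θ.outNode K ∈ Θ.transVerts := by
  unfold outNode
  split_ifs with hA
  exacts [mem_transVerts.2 (.inr ⟨K, hA, rfl⟩), mem_transVerts.2 (.inl ⟨K, hK, rfl⟩)]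

theorem mem_transVerts_of_edgeSpec {u v : ℕ} (h : EdgeSpec Θ mainNode auxNode u v) :
    u ∈ Θ.transVerts ∧ v ∈ Θ.transVerts := by
  simp only [EdgeSpec, outIs_iff] at h
  rcases h with ⟨-, K, M, hK, hM, -, -, -, rfl, rfl⟩ | ⟨K, l, r, c, hK, hP, -, rfl, rfl⟩ |
    ⟨L, hA, rfl, rfl⟩
  · exact ⟨outNode_mem_transVerts hK, mem_transVerts.2 (.inl ⟨M, hM, rfl⟩)⟩
  · exact ⟨outNode_mem_transVerts hK, mem_transVerts.2 (.inl ⟨_, hP, rfl⟩)⟩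
  · exact ⟨mem_transVerts.2 (.inl ⟨L, hA.1, rfl⟩),
      mem_transVerts.2 (.inr ⟨L, hA, rfl⟩)⟩

theorem mem_transTree_edges {e : Sym2 ℕ} : e ∈ Θ.transTree.edges ↔ ∃ u v, e = s(u, v) ∧
    (EdgeSpec Θ mainNode auxNode u v ∨ EdgeSpec Θ mainNode auxNode v u) := by
  refine ⟨fun h => (Finset.mem_filter.1 h).2, ?_⟩
  rintro ⟨u, v, rfl, h⟩
  refine Finset.mem_filter.2
    ⟨Finset.mem_image.2 ⟨(u, v), Finset.mem_product.2 ?_, rfl⟩, u, v, rfl, h⟩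
  rcases h with h | h
  exacts [mem_transVerts_of_edgeSpec h, (mem_transVerts_of_edgeSpec h).symm]

theorem edgeSpec_of_transTree_adj {x y : ℕ} (h : Θ.transTree.graph.Adj x y) :
    EdgeSpec Θ mainNode auxNode x y ∨ EdgeSpec Θ mainNode auxNode y x := by
  obtain ⟨u, v, he, hspec⟩ := mem_transTree_edges.1 h.2
  rcases Sym2.eq_iff.1 he with ⟨rfl, rfl⟩ | ⟨rfl, rfl⟩
  exacts [hspec, hspec.symm]

theorem transTree_kind_mainNode (K : MLLLink) :
    Θ.transTree.kind (mainNode K) = Θ.nodeKind (.inl K) := by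
  simp only [transTree, mainNode, Encodable.encodek, Option.elim]

theorem transTree_kind_auxNode (K : MLLLink) :
    Θ.transTree.kind (auxNode K) = .labeled (Θ.labelSet K) := by
  simp only [transTree, auxNode, Encodable.encodek, Option.elim, nodeKind]

theorem transTree_kind_mainNode_par (l r c : Occ) :
    Θ.transTree.kind (mainNode (.par l r c)) = .par (.par l r c) :=
  transTree_kind_mainNode _

theorem transTree_kind_mainNode_of_not_isPar {K : MLLLink} (hK : ¬ K.IsPar) :
    Θ.transTree.kind (mainNode K) = .labeled (Θ.labelSet K) := by
  rw [transTree_kind_mainNode]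
  cases K
  exacts [rfl, rfl, absurd trivial hK]

theorem transTree_upper_mainNode {l r c : Occ} {K : MLLLink} (hK : K ∈ Θ.links)
    (hl : l ∈ K.concs) : Θ.transTree.upper (mainNode (.par l r c)) = some (Θ.outNode K) := by
  have hex : ∃ K ∈ Θ.links, l ∈ K.concs := ⟨K, hK, hl⟩
  have hchoose : hex.choose = K := Θ.concUnique _ hex.choose_spec.1 _ hK l hex.choose_spec.2 hl
  simp only [transTree, mainNode, Encodable.encodek, Option.bind_some, nodeUpper, dif_pos hex,
    hchoose]

theorem isTranslation_transTree (htd : TransDefined Θ) : IsTranslation Θ Θ.transTree := by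
  refine ⟨htd, mainNode, auxNode, fun _ _ _ _ h => mainNode_injective h,
    fun _ _ _ _ h => auxNode_injective h, fun K _ L _ => mainNode_ne_auxNode K L,
    fun _ => mem_transVerts, ?_, ?_, ?_, ?_, fun _ => mem_transTree_edges⟩
  · intro L _ hL
    exact ⟨Θ.labelSet L, transTree_kind_mainNode_of_not_isPar hL, fun _ => mem_labelSet⟩
  · rintro (_ | _ | _) - (_ | _ | ⟨⟩)
    exact transTree_kind_mainNode_par _ _ _
  · exact fun L _ => ⟨Θ.labelSet L, transTree_kind_auxNode L, fun _ => mem_labelSet⟩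
  · intro l r c _ K hK hl u hu
    rw [outIs_iff.1 hu]
    exact transTree_upper_mainNode hK hl

end ProofStructure

end

namespace PreTree

/-- As long as this holds, `L2` cannot be ⅋-eliminated: that needs `r_{L2}` at the upper
neighbour of its ⅋-node. -/
def Blocks (T : PreTree) (L1 L2 : MLLLink) : Prop :=
  mainNode L1 ∈ T.V ∧ mainNode L2 ∈ T.V ∧
  T.kind (mainNode L1) = .par L1 ∧ T.kind (mainNode L2) = .par L2 ∧
  ∀ u, T.upper (mainNode L2) = some u → ∀ w ∈ T.V, ∀ s, T.kind w = .labeled s →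
    DLabel.right L2 ∈ s → ¬ T.graph.AvoidingReach {mainNode L1, mainNode L2} u w

def ParNodesOf (Θ : ProofStructure) (T : PreTree) : Prop :=
  ∀ v ∈ T.V, ∀ L, T.kind v = .par L → v = mainNode L ∧ L ∈ Θ.links

variable {T T' : PreTree} {S : Set ℕ} {a b : ℕ}

theorem avoidingReach_replaceN (hab : s(a, b) ∈ T.edges) (hne : a ≠ b) (ha : a ∉ S)
    (hb : b ∉ S) (z : ℕ) : T.graph.AvoidingReach S z (replaceN b a z) := by
  unfold replaceN
  split_ifs with hz
  · subst hz
    exact SimpleGraph.AvoidingReach.single (G := T.graph)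
      ⟨hne.symm, by rwa [Sym2.eq_swap]⟩ hb ha
  · exact .refl

theorem not_mem_of_replaceN (hb : b ∉ S) {z : ℕ} (hz : replaceN b a z ∉ S) : z ∉ S := by
  unfold replaceN at hz
  split_ifs at hz with h
  exacts [h ▸ hb, hz]

theorem avoidingReach_of_merge
    (hE : T'.edges = (T.edges.image (Sym2.map (replaceN b a))).filter fun e => ¬ e.IsDiag)
    (hab : s(a, b) ∈ T.edges) (hne : a ≠ b) (ha : a ∉ S) (hb : b ∉ S) {x y : ℕ}
    (h : T'.graph.AvoidingReach S x y) : T.graph.AvoidingReach S x y := by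
  have hedge : ∀ p q, s(p, q) ∈ T.edges → replaceN b a p ≠ replaceN b a q →
      replaceN b a p ∉ S → replaceN b a q ∉ S →
      T.graph.AvoidingReach S (replaceN b a p) (replaceN b a q) := by
    intro p q he hpq hp hq
    have hne₀ : p ≠ q := by rintro rfl; exact hpq rfl
    exact (avoidingReach_replaceN hab hne ha hb p).symm.trans
      ((SimpleGraph.AvoidingReach.single (G := T.graph) ⟨hne₀, he⟩ (not_mem_of_replaceN hb hp)
        (not_mem_of_replaceN hb hq)).trans (avoidingReach_replaceN hab hne ha hb q))
  induction h with
  | refl => exact .refl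
  | tail _ hstep ih =>
    obtain ⟨⟨hpq, hmem⟩, hp, hq⟩ := hstep
    rw [hE, Finset.mem_filter, Finset.mem_image] at hmem
    obtain ⟨⟨e, he, hmap⟩, -⟩ := hmem
    induction e using Sym2.ind with
    | _ p q =>
      rw [Sym2.map_mk, Sym2.eq_iff] at hmap
      refine ih.trans ?_
      rcases hmap with ⟨rfl, rfl⟩ | ⟨rfl, rfl⟩
      · exact hedge p q he hpq hp hq
      · exact hedge q p (by rwa [Sym2.eq_swap]) hpq hp hq

namespace Blocks

variable {L1 L2 : MLLLink}

theorem not_mem_of_kind {x : ℕ} {s : Finset DLabel} (hB : T.Blocks L1 L2)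
    (hx : T.kind x = .labeled s) : x ∉ ({mainNode L1, mainNode L2} : Set ℕ) := by
  rintro (rfl | rfl)
  · exact DNodeKind.noConfusion (hx.symm.trans hB.2.2.1)
  · exact DNodeKind.noConfusion (hx.symm.trans hB.2.2.2.1)

theorem elimAt (hB : T.Blocks L1 L2) {v : ℕ} (hav : s(a, v) ∈ T.edges) (hne : a ≠ v)
    (ha : a ∉ ({mainNode L1, mainNode L2} : Set ℕ))
    (hv : v ∉ ({mainNode L1, mainNode L2} : Set ℕ)) : (T.elimAt v a).Blocks L1 L2 := by
  obtain ⟨hm1, hm2, hk1, hk2, hsep⟩ := hB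
  have hv1 : mainNode L1 ≠ v := fun h => hv (.inl h.symm)
  have hv2 : mainNode L2 ≠ v := fun h => hv (.inr h.symm)
  refine ⟨Finset.mem_erase.2 ⟨hv1, hm1⟩, Finset.mem_erase.2 ⟨hv2, hm2⟩, hk1, hk2, ?_⟩
  intro u hu w hw s hs hr hreach
  exact hsep u hu w (Finset.mem_of_mem_erase hw) s hs hr
    (avoidingReach_of_merge rfl hav hne ha hv hreach)

theorem contract (hB : T.Blocks L1 L2) {n : ℕ} {s s' : Finset DLabel} (haV : a ∈ T.V)
    (hnV : n ∈ T.V) (han : s(a, n) ∈ T.edges) (hne : n ≠ a) (hka : T.kind a = .labeled s)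
    (hkn : T.kind n = .labeled s') : (T.contract a n).Blocks L1 L2 := by
  have ha := hB.not_mem_of_kind hka
  have hn := hB.not_mem_of_kind hkn
  obtain ⟨hm1, hm2, hk1, hk2, hsep⟩ := hB
  have h1a : mainNode L1 ≠ a := fun h => ha (.inl h.symm)
  have h2a : mainNode L2 ≠ a := fun h => ha (.inr h.symm)
  have h1n : mainNode L1 ≠ n := fun h => hn (.inl h.symm)
  have h2n : mainNode L2 ≠ n := fun h => hn (.inr h.symm)
  refine ⟨Finset.mem_erase.2 ⟨h1n, hm1⟩, Finset.mem_erase.2 ⟨h2n, hm2⟩,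
    by simp only [PreTree.contract, if_neg h1a, hk1],
    by simp only [PreTree.contract, if_neg h2a, hk2], ?_⟩
  intro u hu w hw t ht hr hreach
  obtain ⟨u₀, hu₀, rfl⟩ := Option.map_eq_some_iff.1 hu
  have hu₀w : T.graph.AvoidingReach _ u₀ w :=
    (avoidingReach_replaceN han hne.symm ha hn u₀).trans
      (avoidingReach_of_merge rfl han hne.symm ha hn hreach)
  by_cases hwa : w = a
  · subst hwa
    simp only [PreTree.contract, ↓reduceIte, hka, hkn, mergeKind, DNodeKind.labeled.injEq] at ht
    rw [← ht, Finset.mem_union] at hr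
    rcases hr with hr | hr
    · exact hsep u₀ hu₀ w haV s hka hr hu₀w
    · exact hsep u₀ hu₀ n hnV s' hkn hr
        (hu₀w.trans (SimpleGraph.AvoidingReach.single ⟨hne.symm, han⟩ ha hn))
  · simp only [PreTree.contract, if_neg hwa] at ht
    exact hsep u₀ hu₀ w (Finset.mem_of_mem_erase hw) t ht hr hu₀w

end Blocks

end PreTree

def OnCycle (Θ : ProofStructure) (L : MLLLink) : Prop := Relation.TransGen (deNMRel Θ) L L

theorem OnCycle.exists_pred {Θ : ProofStructure} {L : MLLLink} (h : OnCycle Θ L) :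
    ∃ L₀, OnCycle Θ L₀ ∧ deNMRel Θ L₀ L := by
  obtain ⟨L₀, hL₀, hR⟩ := Relation.TransGen.tail'_iff.1 h
  exact ⟨L₀, .head' hR hL₀, hR⟩

namespace Config

def Invariant (Θ : ProofStructure) (c : Config) : Prop :=
  c.tree.ParNodesOf Θ ∧
  ∀ L1 L2, OnCycle Θ L1 → OnCycle Θ L2 → deNMRel Θ L1 L2 → c.tree.Blocks L1 L2

def measure (Θ : ProofStructure) (c : Config) : ℕ :=
  c.tree.V.card + (Θ.links.card - (c.jumped ∩ Θ.links).card)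

variable {Θ : ProofStructure} {c c' : Config} {r : RRule}

theorem Invariant.not_onCycle (hI : c.Invariant Θ) {v : ℕ} {L : MLLLink} {s : Finset DLabel}
    (hv : v ∈ c.tree.V) (hkv : c.tree.kind v = .par L) (hact : c.active ∈ c.tree.V)
    (hks : c.tree.kind c.active = .labeled s) (hup : c.tree.upper v = some c.active)
    (hr : DLabel.right L ∈ s) : ¬ OnCycle Θ L := by
  intro hL
  obtain ⟨L₀, hL₀, hR⟩ := hL.exists_pred
  obtain rfl := (hI.1 v hv L hkv).1
  exact (hI.2 L₀ L hL₀ hL hR).2.2.2.2 c.active hup c.active hact s hks hr .refl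

theorem Invariant.step (hI : c.Invariant Θ) (hs : Step r c c') : c'.Invariant Θ := by
  cases hs with
  | elim c v L s hact hv hks hkv hup hedge _ hr =>
    have hL := hI.not_onCycle hv hkv hact hks hup hr
    obtain ⟨rfl, -⟩ := hI.1 v hv L hkv
    refine ⟨fun w hw => hI.1 w (Finset.mem_of_mem_erase hw), fun L1 L2 h1 h2 hR => ?_⟩
    have hB := hI.2 L1 L2 h1 h2 hR
    refine hB.elimAt hedge (fun h => DNodeKind.noConfusion (hks.symm.trans (h ▸ hkv)))
      (hB.not_mem_of_kind hks) ?_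
    rintro (h | h) <;> obtain rfl := mainNode_injective h
    exacts [hL h1, hL h2]
  | union c n s s' hact hn hne hks hkn hedge =>
    refine ⟨fun w hw L hk => ?_, fun L1 L2 h1 h2 hR =>
      (hI.2 L1 L2 h1 h2 hR).contract hact hn hedge hne hks hkn⟩
    simp only [PreTree.contract] at hk
    split_ifs at hk with hwa
    · simp [hks, hkn, mergeKind] at hk
    · exact hI.1 w (Finset.mem_of_mem_erase hw) L hk
  | jump => exact hI

theorem measure_lt_of_step (hI : c.tree.ParNodesOf Θ) (hs : Step r c c') :
    c'.measure Θ < c.measure Θ := by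
  cases hs with
  | elim c v _ _ _ hv =>
    have := Finset.card_erase_lt_of_mem hv
    simp only [measure, PreTree.elimAt]
    omega
  | union c n _ _ _ hn =>
    have := Finset.card_erase_lt_of_mem hn
    simp only [measure, PreTree.contract]
    omega
  | jump c v _ L _ _ _ hv _ _ hkv _ _ _ _ hLj =>
    have hL : L ∈ Θ.links := (hI v hv L hkv).2
    have hnotin : L ∉ c.jumped ∩ Θ.links := fun h => hLj (Finset.mem_inter.1 h).1
    have hcard : (insert L c.jumped ∩ Θ.links).card = (c.jumped ∩ Θ.links).card + 1 := by
      rw [Finset.insert_inter_of_mem hL, Finset.card_insert_of_notMem hnotin]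
    have hlt : (c.jumped ∩ Θ.links).card < Θ.links.card :=
      Finset.card_lt_card ((Finset.ssubset_iff_of_subset Finset.inter_subset_right).2
        ⟨L, hL, hnotin⟩)
    simp only [measure]
    omega

end Config

namespace ProofStructure

variable {Θ : ProofStructure} {C : Set Occ} {N : Set ℕ}

def IsNodeOf (Θ : ProofStructure) (K : MLLLink) (v : ℕ) : Prop :=
  (K ∈ Θ.links ∧ v = mainNode K) ∨ (hasAux Θ K ∧ v = auxNode K)

theorem IsNodeOf.mem_links {K : MLLLink} {v : ℕ} (h : IsNodeOf Θ K v) : K ∈ Θ.links :=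
  h.elim (·.1) (·.1.1)

theorem isNodeOf_outNode {K : MLLLink} (hK : K ∈ Θ.links) : IsNodeOf Θ K (Θ.outNode K) := by
  unfold outNode
  split_ifs with hA
  exacts [.inr ⟨hA, rfl⟩, .inl ⟨hK, rfl⟩]

/-- The occurrences of `S_∀ℓ(Θ)` outside `C` standing for the node `v` of `T(Θ)`, chosen so that
edges of `T(Θ)` become paths of `S_∀ℓ(Θ)`. -/
def IsRep (Θ : ProofStructure) (C : Set Occ) (v : ℕ) (o : Occ) : Prop :=
  o ∉ C ∧ ((∃ K ∈ Θ.links, v = mainNode K ∧ o ∈ K.concs) ∨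
    ∃ l r c, hasAux Θ (.par l r c) ∧ v = auxNode (.par l r c) ∧
      (o = c ∨ ∃ r', MLLLink.par c r' o ∈ Θ.links))

theorem isRep_of_isNodeOf {K : MLLLink} {v : ℕ} {x : Occ} (hv : IsNodeOf Θ K v)
    (hx : x ∈ K.concs) (hxC : x ∉ C) : IsRep Θ C v x := by
  refine ⟨hxC, ?_⟩
  rcases hv with ⟨hK, rfl⟩ | ⟨hA, rfl⟩
  · exact .inl ⟨K, hK, rfl, hx⟩
  · obtain ⟨l, r, c, rfl⟩ := exists_eq_par_of_hasAux hA
    exact .inr ⟨l, r, c, hA, rfl, .inl (by simpa [MLLLink.concs] using hx)⟩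

theorem exists_isNodeOf_of_right_mem {w : ℕ} {s : Finset DLabel} {l r c : Occ}
    (hw : w ∈ Θ.transTree.V) (hs : Θ.transTree.kind w = .labeled s)
    (hr : DLabel.right (.par l r c) ∈ s) : ∃ K, IsNodeOf Θ K w ∧ r ∈ K.concs := by
  have hlabel : ∀ K, s = Θ.labelSet K → r ∈ K.concs := by
    rintro K rfl
    obtain ⟨x, hx, ⟨P, -, hP⟩ | ⟨P, ⟨-, l', c', rfl⟩, hP⟩⟩ := mem_labelSet.1 hr
    · cases hP
    · cases hP
      exact hx
  rcases mem_transVerts.1 hw with ⟨K, hK, rfl⟩ | ⟨K, hA, rfl⟩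
  · refine ⟨K, .inl ⟨hK, rfl⟩, hlabel K ?_⟩
    cases K
    case par => exact DNodeKind.noConfusion ((transTree_kind_mainNode_par ..).symm.trans hs)
    all_goals
      rw [transTree_kind_mainNode_of_not_isPar id] at hs
      exact (DNodeKind.labeled.inj hs).symm
  · rw [transTree_kind_auxNode] at hs
    exact ⟨K, .inr ⟨hA, rfl⟩, hlabel K (DNodeKind.labeled.inj hs).symm⟩

theorem avoidingReach_of_below {c o o' : Occ} (ho : o ∉ C) (ho' : o' ∉ C)
    (h : o = c ∨ ∃ r, MLLLink.par c r o ∈ Θ.links)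
    (h' : o' = c ∨ ∃ r, MLLLink.par c r o' ∈ Θ.links) :
    (DRGraphL Θ).AvoidingReach C o o' := by
  rcases h with rfl | ⟨r, hr⟩ <;> rcases h' with rfl | ⟨r', hr'⟩
  · exact .refl
  · exact .single (drAdj_of_par_mem hr') ho ho'
  · exact (SimpleGraph.AvoidingReach.single (drAdj_of_par_mem hr) ho' ho).symm
  · cases Θ.premUnique _ hr _ hr' c (by simp [MLLLink.prems]) (by simp [MLLLink.prems])
    exact .refl

theorem IsRep.avoidingReach {v : ℕ} {o o' : Occ} (ho : IsRep Θ C v o) (ho' : IsRep Θ C v o') :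
    (DRGraphL Θ).AvoidingReach C o o' := by
  obtain ⟨hoC, ⟨K, hK, rfl, hoK⟩ | ⟨l, r, c, -, rfl, hoc⟩⟩ := ho <;>
    obtain ⟨ho'C, ⟨K', -, hv, ho'K⟩ | ⟨l', r', c', -, hv, ho'c⟩⟩ := ho'
  · obtain rfl := mainNode_injective hv
    rcases eq_or_drAdj_of_mem_concs hK hoK ho'K with rfl | hadj
    exacts [.refl, .single hadj hoC ho'C]
  · exact absurd hv (mainNode_ne_auxNode _ _)
  · exact absurd hv.symm (mainNode_ne_auxNode _ _)
  · cases auxNode_injective hv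
    exact avoidingReach_of_below hoC ho'C hoc ho'c

theorem exists_isRep_of_edgeSpec
    (hCN : ∀ K ∈ Θ.links, ∀ x ∈ K.concs, x ∈ C → mainNode K ∈ N) {u v : ℕ} (hu : u ∉ N)
    (hv : v ∉ N) (h : EdgeSpec Θ mainNode auxNode u v) :
    ∃ o o', IsRep Θ C u o ∧ IsRep Θ C v o' ∧ (DRGraphL Θ).AvoidingReach C o o' := by
  simp only [EdgeSpec, outIs_iff] at h
  rcases h with ⟨x, K, M, hK, hM, hxK, hxM, hMpar, rfl, rfl⟩ |
    ⟨K, l, r, c, hK, hP, hlK, rfl, rfl⟩ | ⟨L, hA, rfl, rfl⟩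
  · obtain ⟨a, b, c, rfl⟩ : ∃ a b c, M = .tensor a b c := by
      cases M
      exacts [by simp [MLLLink.prems] at hxM, ⟨_, _, _, rfl⟩, absurd trivial hMpar]
    have hc : c ∉ C := fun h => hv (hCN _ hM c (by simp [MLLLink.concs]) h)
    have hx : x ∉ C := by
      intro hxC
      have hA : hasAux Θ K := by
        by_contra hA
        exact hu (by simpa [outNode, hA] using hCN K hK x hxK hxC)
      obtain ⟨-, l', r', c', rfl, P, hP⟩ := hA
      obtain rfl : x = c' := by simpa [MLLLink.concs] using hxK
      rcases hP with ⟨hPm, r₀, c₀, rfl⟩ | ⟨hPm, l₀, c₀, rfl⟩ <;>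
        cases Θ.premUnique _ hPm _ hM x (by simp [MLLLink.prems]) hxM
    exact ⟨x, c, isRep_of_isNodeOf (isNodeOf_outNode hK) hxK hx,
      isRep_of_isNodeOf (.inl ⟨hM, rfl⟩) (by simp [MLLLink.concs]) hc,
      .single (drAdj_of_tensor_mem hM hxM) hx hc⟩
  · have hc : c ∉ C := fun h => hv (hCN _ hP c (by simp [MLLLink.concs]) h)
    have hcv : IsRep Θ C (mainNode (.par l r c)) c :=
      isRep_of_isNodeOf (.inl ⟨hP, rfl⟩) (by simp [MLLLink.concs]) hc
    by_cases hA : hasAux Θ K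
    · obtain ⟨a, b, c', rfl⟩ := exists_eq_par_of_hasAux hA
      obtain rfl : l = c' := by simpa [MLLLink.concs] using hlK
      exact ⟨c, c, ⟨hc, .inr ⟨a, b, l, hA, by simp [outNode, hA], .inr ⟨r, hP⟩⟩⟩, hcv,
        .refl⟩
    · have hl : l ∉ C := fun h => hu (by simpa [outNode, hA] using hCN K hK l hlK h)
      exact ⟨l, c, isRep_of_isNodeOf (isNodeOf_outNode hK) hlK hl, hcv,
        .single (drAdj_of_par_mem hP) hl hc⟩
  · obtain ⟨a, b, c, rfl⟩ := exists_eq_par_of_hasAux hA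
    have hc : c ∉ C := fun h => hu (hCN _ hA.1 c (by simp [MLLLink.concs]) h)
    exact ⟨c, c, isRep_of_isNodeOf (.inl ⟨hA.1, rfl⟩) (by simp [MLLLink.concs]) hc,
      isRep_of_isNodeOf (.inr ⟨hA, rfl⟩) (by simp [MLLLink.concs]) hc, .refl⟩

theorem IsRep.exists_of_avoidingReach
    (hCN : ∀ K ∈ Θ.links, ∀ x ∈ K.concs, x ∈ C → mainNode K ∈ N) {x y : ℕ}
    (h : Θ.transTree.graph.AvoidingReach N x y) {o : Occ} (ho : IsRep Θ C x o) :
    ∃ o', IsRep Θ C y o' ∧ (DRGraphL Θ).AvoidingReach C o o' := by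
  induction h with
  | refl => exact ⟨o, ho, .refl⟩
  | tail _ hstep ih =>
    obtain ⟨o₁, ho₁, hoo₁⟩ := ih
    obtain ⟨hadj, hb, hc⟩ := hstep
    obtain ⟨a, a', ha, ha', haa'⟩ : ∃ a a', IsRep Θ C _ a ∧ IsRep Θ C _ a' ∧
        (DRGraphL Θ).AvoidingReach C a a' := by
      rcases edgeSpec_of_transTree_adj hadj with h | h
      · exact exists_isRep_of_edgeSpec hCN hb hc h
      · obtain ⟨a', a, ha', ha, h⟩ := exists_isRep_of_edgeSpec hCN hc hb h
        exact ⟨a, a', ha, ha', h.symm⟩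
    exact ⟨a', ha', hoo₁.trans ((ho₁.avoidingReach ha).trans haa')⟩

theorem not_avoidingReach_of_mem_path (htree : DRTreeL Θ) {l r c c' : Occ}
    (hP : MLLLink.par l r c ∈ Θ.links) {p : (DRGraphL Θ).Walk l r} (hp : p.IsPath)
    (hc' : c' ∈ p.support) : ¬ (DRGraphL Θ).AvoidingReach {c', c} l r := by
  intro h
  rcases h.eq_or_exists_walk with heq | ⟨q, hq⟩
  · exact (ne_of_par_mem hP).1 heq
  · refine hq c' ?_ (.inl rfl)
    exact SimpleGraph.mem_support_of_isAcyclic_induce htree.isAcyclic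
      support_drGraphL_subset ⟨_, hP, .inr (by simp [MLLLink.prems])⟩ hp hc' q

theorem not_isRep_of_isNodeOf {l r c l' r' c' o : Occ} {v : ℕ}
    (hv : IsNodeOf Θ (.par l r c) v) (hP : MLLLink.par l' r' c' ∈ Θ.links)
    (hc : c ∈ (MLLLink.par l' r' c').prems) (hcC : c ∈ C) (hc'C : c' ∈ C) :
    ¬ IsRep Θ C v o := by
  rintro ⟨hoC, ⟨K, -, h, hoK⟩ | ⟨l₀, r₀, c₀, -, h, ho⟩⟩ <;>
    rcases hv with ⟨-, rfl⟩ | ⟨-, rfl⟩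
  · cases mainNode_injective h
    obtain rfl : o = c := by simpa [MLLLink.concs] using hoK
    exact hoC hcC
  · exact mainNode_ne_auxNode _ _ h.symm
  · exact mainNode_ne_auxNode _ _ h
  · cases auxNode_injective h
    rcases ho with rfl | ⟨r₁, hP₁⟩
    · exact hoC hcC
    · cases Θ.premUnique _ hP₁ _ hP c (by simp [MLLLink.prems]) hc
      exact hoC hc'C

theorem avoidingReach_of_isRep {l1 r1 c1 l2 r2 c2 x o : Occ} {K : MLLLink} {v : ℕ}
    (hL1 : MLLLink.par l1 r1 c1 ∈ Θ.links) (hL2 : MLLLink.par l2 r2 c2 ∈ Θ.links)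
    (hv : IsNodeOf Θ K v) (hx : x ∈ K.concs) (hxL2 : x ∈ (MLLLink.par l2 r2 c2).prems)
    (ho : IsRep Θ {c1, c2} v o) : (DRGraphL Θ).AvoidingReach {c1, c2} o x := by
  by_cases hxC : x ∈ ({c1, c2} : Set Occ)
  · exfalso
    rcases hxC with rfl | rfl
    · cases Θ.concUnique _ hv.mem_links _ hL1 x hx (by simp [MLLLink.concs])
      exact not_isRep_of_isNodeOf hv hL2 hxL2 (.inl rfl) (.inr rfl) ho
    · have := ne_of_par_mem hL2
      simp only [MLLLink.prems, List.mem_cons, List.not_mem_nil, or_false] at hxL2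
      tauto
  · exact ho.avoidingReach (isRep_of_isNodeOf hv hx hxC)

theorem blocks_transTree (htree : DRTreeL Θ) {L1 L2 : MLLLink} (hR : deNMRel Θ L1 L2) :
    Θ.transTree.Blocks L1 L2 := by
  obtain ⟨hL1, hL2, -, l1, r1, c1, rfl, l2, r2, c2, rfl, p, hp, hc1⟩ := hR
  refine ⟨mem_transVerts.2 (.inl ⟨_, hL1, rfl⟩), mem_transVerts.2 (.inl ⟨_, hL2, rfl⟩),
    transTree_kind_mainNode_par .., transTree_kind_mainNode_par .., ?_⟩
  intro u hu w hw s hs hr hreach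
  have hCN : ∀ K ∈ Θ.links, ∀ x ∈ K.concs, x ∈ ({c1, c2} : Set Occ) →
      mainNode K ∈ ({mainNode (.par l1 r1 c1), mainNode (.par l2 r2 c2)} : Set ℕ) := by
    rintro K hK x hx (rfl | rfl)
    · exact .inl (congrArg mainNode (Θ.concUnique K hK _ hL1 _ hx (by simp [MLLLink.concs])))
    · exact .inr (congrArg mainNode (Θ.concUnique K hK _ hL2 _ hx (by simp [MLLLink.concs])))
  have hl2 : l2 ∈ (MLLLink.par l2 r2 c2).prems := by simp [MLLLink.prems]
  have hr2 : r2 ∈ (MLLLink.par l2 r2 c2).prems := by simp [MLLLink.prems]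
  obtain ⟨Kl, hKl, -, hl2Kl⟩ := Θ.premIsConc _ hL2 l2 hl2
  rw [transTree_upper_mainNode hKl hl2Kl, Option.some_inj] at hu
  subst hu
  obtain ⟨Kr, hwKr, hr2Kr⟩ := exists_isNodeOf_of_right_mem hw hs hr
  obtain ⟨o, o', ho, ho', hoo'⟩ : ∃ o o', IsRep Θ {c1, c2} (Θ.outNode Kl) o ∧
      IsRep Θ {c1, c2} w o' ∧ (DRGraphL Θ).AvoidingReach {c1, c2} o o' := by
    by_cases hl2C : l2 ∈ ({c1, c2} : Set Occ)
    · have hr2C : r2 ∉ ({c1, c2} : Set Occ) := by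
        have := ne_of_par_mem hL2
        simp only [Set.mem_insert_iff, Set.mem_singleton_iff] at hl2C ⊢
        grind
      have hwr2 := isRep_of_isNodeOf hwKr hr2Kr hr2C
      obtain ⟨o, ho, h⟩ := hwr2.exists_of_avoidingReach hCN hreach.symm
      exact ⟨o, r2, ho, hwr2, h.symm⟩
    · have hul2 := isRep_of_isNodeOf (isNodeOf_outNode hKl) hl2Kl hl2C
      obtain ⟨o', ho', h⟩ := hul2.exists_of_avoidingReach hCN hreach
      exact ⟨l2, o', hul2, ho', h⟩
  refine not_avoidingReach_of_mem_path htree hL2 hp hc1 ?_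
  exact ((avoidingReach_of_isRep hL1 hL2 (isNodeOf_outNode hKl) hl2Kl hl2 ho).symm.trans
    hoo').trans (avoidingReach_of_isRep hL1 hL2 hwKr hr2Kr hr2 ho')

theorem parNodesOf_transTree : Θ.transTree.ParNodesOf Θ := by
  intro v hv L hk
  rcases mem_transVerts.1 hv with ⟨K, hK, rfl⟩ | ⟨K, -, rfl⟩
  · rw [transTree_kind_mainNode] at hk
    cases K <;> simp only [nodeKind, reduceCtorEq, DNodeKind.par.injEq] at hk
    subst hk
    exact ⟨rfl, hK⟩
  · simp [transTree_kind_auxNode] at hk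

theorem invariant_transTree (htree : DRTreeL Θ) (n : ℕ) :
    Config.Invariant Θ ⟨Θ.transTree, n, ∅⟩ :=
  ⟨parNodesOf_transTree, fun _ _ _ _ hR => blocks_transTree htree hR⟩

theorem isLabeledVertex_outNode {K : MLLLink} (hK : K ∈ Θ.links) {x : Occ} (hx : x ∈ K.concs)
    (hxP : premOfParLink Θ x) : Θ.transTree.IsLabeledVertex (Θ.outNode K) := by
  refine ⟨outNode_mem_transVerts hK, ?_⟩
  unfold outNode
  split_ifs with hA
  · exact ⟨_, transTree_kind_auxNode K⟩
  · refine ⟨_, transTree_kind_mainNode_of_not_isPar fun hpar => hA ⟨hK, ?_⟩⟩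
    cases K <;> simp only [MLLLink.IsPar] at hpar
    obtain rfl : x = _ := by simpa [MLLLink.concs] using hx
    exact ⟨_, _, _, rfl, hxP⟩

end ProofStructure

/-- If Algorithm A with input Θ outputs yes, then the directed graph
G(S_∀ℓ(Θ)) is acyclic. -/
theorem algorithm_A_yes_implies_directed_acyclic (Θ : ProofStructure)
    (hyes : AlgAYes Θ) :
    DirAcyclicRel (deNMRel Θ) := by
  intro L hL
  obtain ⟨L₀, hL₀, hR⟩ := OnCycle.exists_pred hL
  obtain ⟨-, hLm, -, -, -, -, -, l, r, c, rfl, -⟩ := id hR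
  obtain ⟨K, hK, -, hlK⟩ := Θ.premIsConc _ hLm l (by simp [MLLLink.prems])
  have hstart := Θ.isLabeledVertex_outNode hK hlK ⟨_, .inl ⟨hLm, r, c, rfl⟩⟩
  obtain ⟨c', hreach, hinv, hstuck⟩ :=
    Relation.exists_reflTransGen_forall_not_of_measure (r := StepAny) (Config.measure Θ)
      (fun _ _ hI ⟨_, hs⟩ => hI.step hs)
      (fun _ _ hI ⟨_, hs⟩ => Config.measure_lt_of_step hI.1 hs)
      (ProofStructure.invariant_transTree hyes.1.1 (Θ.outNode K))
  obtain ⟨hV, -, s, hs, -⟩ := hyes.2 _ (ProofStructure.isTranslation_transTree hyes.1) _ hstart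
    c' hreach fun r c'' h => hstuck c'' ⟨r, h⟩
  obtain ⟨-, hmem, -, hkind, -⟩ := hinv.2 L₀ _ hL₀ hL hR
  rw [hV, Finset.mem_singleton] at hmem
  rw [hmem, hs] at hkind
  exact DNodeKind.noConfusion hkind
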